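/- arXiv:2109.04836 — 6 statements merged into one kernel-verified Lean document; each statement's English description precedes it below -/
import Mathlib

section
/- Let α be irrational and q_h the denominator of a convergent of α. If I is an interval of real numbers with length |I| ≤ 1/q_h, then the number of pairs (β, k) with β ∈ I, 1 ≤ k ≤ q_h, and β + kα ∈ ℤ is at most 3. -/
open scoped Classical

theorem stmt_2_aux (α : ℝ) (p : ℤ) (q q' : ℕ)
    (hq : 0 < q) (hq' : q ≤ q') (hcop : IsCoprime p (q : ℤ))
    (hconv : |α - (p : ℝ) / q| < 1 / (q * q'))
    (a b : ℝ) (hab : a ≤ b) (hlen : b - a ≤ 1 / q) :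
    ((Finset.Icc 1 q).filter
      (fun k : ℕ => ∃ β ∈ Set.Icc a b, ∃ m : ℤ, β + (k : ℝ) * α = m)).card ≤ 3 := by
  set S := (Finset.Icc 1 q).filter
      (fun k : ℕ => ∃ β ∈ Set.Icc a b, ∃ m : ℤ, β + (k : ℝ) * α = m) with hS
  have hqR : (0:ℝ) < q := by positivity
  have hq'0 : 0 < q' := lt_of_lt_of_le hq hq'
  have hq'R : (0:ℝ) < q' := by positivity
  have key : ∀ k ∈ S, ∀ k' ∈ S, k < k' →
      ∃ e M : ℤ, (e = 1 ∨ e = -1) ∧ ((k':ℤ) - k) * p = M * q + e := by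
    intro k hk k' hk' hlt
    rw [hS, Finset.mem_filter, Finset.mem_Icc] at hk hk'
    obtain ⟨⟨hk1, hkq⟩, β, hβ, m, hm⟩ := hk
    obtain ⟨⟨hk1', hkq'⟩, β', hβ', m', hm'⟩ := hk'
    obtain ⟨hβa, hβb⟩ := hβ
    obtain ⟨hβa', hβb'⟩ := hβ'
    set D : ℤ := (k':ℤ) - k with hD
    have hD1 : 1 ≤ D := by omega
    have hDq : D ≤ (q:ℤ) - 1 := by omega
    have hDR1 : (1:ℝ) ≤ (D:ℝ) := by exact_mod_cast hD1
    have hDRq' : (D:ℝ) ≤ (q':ℝ) := by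
      have : D ≤ (q':ℤ) := by omega
      exact_mod_cast this
    set M : ℤ := m' - m with hM
    have h1 : (D:ℝ) * α - M = β - β' := by
      push_cast [hD, hM]
      nlinarith [hm, hm']
    have h2 : |(D:ℝ) * α - M| ≤ 1 / q := by
      rw [h1, abs_le]
      constructor <;> linarith
    have h3 : |(D:ℝ) * α - D * p / q| < 1 / q := by
      have heq : (D:ℝ) * α - D * p / q = D * (α - p / q) := by ring
      rw [heq, abs_mul, abs_of_pos (by linarith : (0:ℝ) < (D:ℝ))]
      calc (D:ℝ) * |α - p/q| < D * (1/(q*q')) :=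
            mul_lt_mul_of_pos_left hconv (by linarith)
        _ ≤ 1/q := by
            rw [mul_one_div, div_le_div_iff₀ (by positivity) hqR]
            nlinarith
    have h4 : |(D:ℝ) * p / q - M| < 2 / q := by
      have htri : |(D:ℝ)*p/q - M| ≤ |(D:ℝ)*p/q - D*α| + |(D:ℝ)*α - M| :=
        abs_sub_le _ _ _
      have hcomm : |(D:ℝ)*p/q - D*α| = |(D:ℝ)*α - D*p/q| := abs_sub_comm _ _
      have h2q : (2:ℝ)/q = 1/q + 1/q := by ring
      rw [hcomm] at htri
      linarith
    have h5 : |((D*p - M*q : ℤ) : ℝ)| < 2 := by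
      have hne : (q:ℝ) ≠ 0 := ne_of_gt hqR
      have heq : ((D*p - M*q : ℤ) : ℝ) = ((D:ℝ)*p/q - M) * q := by
        push_cast
        field_simp
      rw [heq, abs_mul, abs_of_pos hqR]
      calc |(D:ℝ)*p/q - M| * q < (2/q) * q := mul_lt_mul_of_pos_right h4 hqR
        _ = 2 := by field_simp
    set e : ℤ := D*p - M*q with hE
    have he2 : -2 < e ∧ e < 2 := by
      have h6 := abs_lt.mp h5
      exact ⟨by exact_mod_cast h6.1, by exact_mod_cast h6.2⟩
    have hene : e ≠ 0 := by
      intro h0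
      have hDpM : D * p = M * (q:ℤ) := by linarith
      have hdvd : (q:ℤ) ∣ D * p := ⟨M, by rw [hDpM, mul_comm]⟩
      have hqD : (q:ℤ) ∣ D := hcop.symm.dvd_of_dvd_mul_right hdvd
      have := Int.le_of_dvd (by omega) hqD
      omega
    exact ⟨e, M, by omega, by linarith⟩
  by_contra hcard
  push_neg at hcard
  have hcardle : S.card ≤ q := by
    have := Finset.card_filter_le (Finset.Icc 1 q)
      (fun k : ℕ => ∃ β ∈ Set.Icc a b, ∃ m : ℤ, β + (k : ℝ) * α = m)
    rw [Nat.card_Icc, ← hS] at this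
    omega
  have hq4 : 4 ≤ q := by omega
  have hne : S.Nonempty := Finset.card_pos.mp (by omega)
  set k0 := S.min' hne with hk0
  have hk0S : k0 ∈ S := S.min'_mem hne
  set S' := S.erase k0 with hS'
  have hS'card : 3 ≤ S'.card := by
    rw [hS', Finset.card_erase_of_mem hk0S]; omega
  set t : Finset ℤ := {(1:ℤ) % (q:ℤ), (-1:ℤ) % (q:ℤ)} with ht
  have htcard : t.card ≤ 2 := by
    apply le_trans (Finset.card_insert_le _ _)
    simp
  have hmaps : ∀ k ∈ S', (((k:ℤ) - k0) * p) % q ∈ t := by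
    intro k hk
    have hkS : k ∈ S := Finset.mem_of_mem_erase hk
    have hltk : k0 < k :=
      lt_of_le_of_ne (S.min'_le k hkS) (Ne.symm (Finset.ne_of_mem_erase hk))
    obtain ⟨e, M, he, hEq⟩ := key k0 hk0S k hkS hltk
    rw [hEq]
    have hmod : (M * (q:ℤ) + e) % (q:ℤ) = e % q := by
      rw [add_comm, Int.add_mul_emod_self_right]
    rw [hmod]
    rcases he with h | h <;> simp [ht, h]
  obtain ⟨x, hx, y, hy, hxy, hfeq⟩ :=
    Finset.exists_ne_map_eq_of_card_lt_of_maps_to (by omega : t.card < S'.card) hmaps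
  have final : ∀ x ∈ S', ∀ y ∈ S', x < y →
      (((x:ℤ) - k0) * p) % (q:ℤ) = (((y:ℤ) - k0) * p) % (q:ℤ) → False := by
    intro x hx y hy hltxy hfe
    have hxS : x ∈ S := Finset.mem_of_mem_erase hx
    have hyS : y ∈ S := Finset.mem_of_mem_erase hy
    obtain ⟨e, M, he, hEq⟩ := key x hxS y hyS hltxy
    have hmodeq : ((x:ℤ) - k0) * p ≡ ((y:ℤ) - k0) * p [ZMOD (q:ℤ)] := hfe
    have hdvd : (q:ℤ) ∣ ((y:ℤ) - k0) * p - ((x:ℤ) - k0) * p := hmodeq.dvd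
    have hdvd2 : (q:ℤ) ∣ M * q + e := by
      have hr : ((y:ℤ) - k0) * p - ((x:ℤ) - k0) * p = ((y:ℤ) - x) * p := by ring
      rw [hr, hEq] at hdvd
      exact hdvd
    have hdvde : (q:ℤ) ∣ e := by
      have hqq : (q:ℤ) ∣ M * q := ⟨M, by ring⟩
      exact (dvd_add_right hqq).mp hdvd2
    have hd1 : (q:ℤ) ∣ 1 := by
      rcases he with h | h
      · rwa [h] at hdvde
      · rw [h] at hdvde
        exact (dvd_neg).mp hdvde
    have := Int.le_of_dvd one_pos hd1
    omega
  rcases lt_or_gt_of_ne hxy with h | h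
  · exact final x hx y hy h hfeq
  · exact final y hy x hx h hfeq.symm

/-- Lemma 1(i): if `p/q` is a convergent of the irrational `α` with next
convergent denominator `q'` (so `|α - p/q| < 1/(q q')` and `gcd(p,q)=1`),
and `I = [a,b]` is an interval of length at most `1/q`, then the number of
`k ∈ {1,...,q}` for which some `β ∈ I` has `β + kα ∈ ℤ` is at most `3`. -/
theorem stmt_2 (α : ℝ) (hα : Irrational α) (p : ℤ) (q q' : ℕ)
    (hq : 0 < q) (hq' : q ≤ q') (hcop : IsCoprime p (q : ℤ))
    (hconv : |α - (p : ℝ) / q| < 1 / (q * q'))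
    (a b : ℝ) (hab : a ≤ b) (hlen : b - a ≤ 1 / q) :
    ((Finset.Icc 1 q).filter
      (fun k => ∃ β ∈ Set.Icc a b, ∃ m : ℤ, β + (k : ℝ) * α = m)).card ≤ 3 := by
  have hrw : (do let x ← Finset.Icc 1 q
                 pure ((x : ℝ))) = (Finset.Icc 1 q).image (fun x : ℕ => (x : ℝ)) := by
    simp [Bind.bind, Pure.pure, Finset.biUnion_singleton]
  rw [hrw]
  calc (((Finset.Icc 1 q).image (fun x : ℕ => (x : ℝ))).filter
        (fun k : ℝ => ∃ β ∈ Set.Icc a b, ∃ m : ℤ, β + k * α = m)).card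
      ≤ ((Finset.Icc 1 q).filter
        (fun k : ℕ => ∃ β ∈ Set.Icc a b, ∃ m : ℤ, β + (k : ℝ) * α = m)).card := by
        rw [Finset.filter_image]
        exact Finset.card_image_le
    _ ≤ 3 := stmt_2_aux α p q q' hq hq' hcop hconv a b hab hlen
end

section
/- Let α be irrational and q_h the denominator of a convergent of α. If I is an interval of real numbers with length |I| ≥ 3/q_h, then there exist β ∈ I and k ∈ {1, ..., q_h} such that β + kα ∈ ℤ. -/
/-!
Write `kα = kp/q + e_k`; for `k ≤ q ≤ q'` the convergent bound gives `|e_k| < 1/q`. An interval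
of length `3/q` contains `[(N-1)/q, (N+1)/q]` for some integer `N`, and since `p` is invertible
mod `q` there is `k ∈ {1, …, q}` with `N ≡ -kp (mod q)`, i.e. `N/q = m - kp/q` with `m ∈ ℤ`.
Then `β = m - kα = N/q - e_k` lies in the interval.
-/

theorem IsCoprime.exists_mem_Icc_eq_mul_sub_mul {p : ℤ} {q : ℕ} (h : IsCoprime p (q : ℤ))
    (hq : 0 < q) (N : ℤ) : ∃ k ∈ Finset.Icc 1 q, ∃ m : ℤ, N = q * m - k * p := by
  obtain ⟨u, v, huv⟩ := h
  have hqZ : (0 : ℤ) < q := by exact_mod_cast hq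
  -- `k` is the representative of `-N u` in `{1, …, q}`
  set t := (-N * u - 1) / q
  set k := (-N * u - 1) % q + 1 with hk
  have hk1 : 1 ≤ k := by have := Int.emod_nonneg (-N * u - 1) hqZ.ne'; omega
  have hkq : k ≤ q := by have := Int.emod_lt_of_pos (-N * u - 1) hqZ; omega
  have hk_def : k = -N * u - q * t := by rw [hk, Int.emod_def]; ring
  refine ⟨k.toNat, ?_, N * v - t * p, ?_⟩
  · rw [Finset.mem_Icc]; omega
  · rw [Int.toNat_of_nonneg (by omega), hk_def]
    linear_combination (-N) * huv

theorem exists_int_Icc_sub_one_div_add_one_div_subset {q a b : ℝ} (hq : 0 < q)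
    (h : 3 / q ≤ b - a) : ∃ N : ℤ, Set.Icc ((N - 1) / q) ((N + 1) / q) ⊆ Set.Icc a b := by
  have h3 : 3 ≤ q * b - q * a := by rw [div_le_iff₀ hq] at h; linarith
  refine ⟨⌈q * a⌉ + 1, Set.Icc_subset_Icc ?_ ?_⟩
  · rw [le_div_iff₀ hq]; push_cast; linarith [Int.le_ceil (q * a)]
  · rw [div_le_iff₀ hq]; push_cast; linarith [Int.ceil_lt_add_one (q * a)]

theorem abs_mul_lt_of_abs_lt_one_div_mul {x k q q' : ℝ} (hx : |x| < 1 / (q * q'))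
    (hk₀ : 0 ≤ k) (hk : k ≤ q') : |k * x| < 1 / q := by
  have hq' : 0 < q' := by
    refine (hk₀.trans hk).lt_of_ne' fun h => ?_
    simp only [h, mul_zero, div_zero] at hx
    exact (abs_nonneg x).not_gt hx
  calc |k * x| = k * |x| := by rw [abs_mul, abs_of_nonneg hk₀]
    _ ≤ q' * |x| := by gcongr
    _ < q' * (1 / (q * q')) := by gcongr
    _ = 1 / q := by field_simp

theorem stmt_3_general (α : ℝ) (p : ℤ) (q q' : ℕ)
    (hq : 0 < q) (hq' : q ≤ q') (hcop : IsCoprime p (q : ℤ))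
    (hconv : |α - (p : ℝ) / q| < 1 / (q * q'))
    (a b : ℝ) (hlen : 3 / q ≤ b - a) :
    ∃ β ∈ Set.Icc a b, ∃ k ∈ Finset.Icc 1 q, ∃ m : ℤ,
      β + (k : ℝ) * α = m := by
  have hqR : (0 : ℝ) < q := by exact_mod_cast hq
  obtain ⟨N, hN⟩ := exists_int_Icc_sub_one_div_add_one_div_subset hqR hlen
  obtain ⟨k, hk, m, hNm⟩ := hcop.exists_mem_Icc_eq_mul_sub_mul hq N
  have hkq' : (k : ℝ) ≤ q' := by exact_mod_cast (Finset.mem_Icc.mp hk).2.trans hq'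
  have he := abs_lt.mp (abs_mul_lt_of_abs_lt_one_div_mul hconv k.cast_nonneg hkq')
  have hβ : (m : ℝ) - k * α = N / q - k * (α - p / q) := by
    rw [hNm]; push_cast; field_simp; ring
  refine ⟨m - k * α, hN ⟨?_, ?_⟩, k, hk, m, by ring⟩ <;>
    simp only [hβ, sub_div, add_div] <;> linarith [he.1, he.2]

/-- Lemma 1(ii): if `p/q` is a convergent of the irrational `α` with next
convergent denominator `q'` (so `|α - p/q| < 1/(q q')` and `gcd(p,q)=1`),
and `I = [a,b]` is an interval of length at least `3/q`, then there exist
`β ∈ I` and `k ∈ {1,...,q}` with `β + kα ∈ ℤ`. -/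
theorem stmt_3 (α : ℝ) (hα : Irrational α) (p : ℤ) (q q' : ℕ)
    (hq : 0 < q) (hq' : q ≤ q') (hcop : IsCoprime p (q : ℤ))
    (hconv : |α - (p : ℝ) / q| < 1 / (q * q'))
    (a b : ℝ) (hlen : 3 / q ≤ b - a) :
    ∃ β ∈ Set.Icc a b, ∃ k ∈ Finset.Icc 1 q, ∃ m : ℤ,
      β + (k : ℝ) * α = m :=
  stmt_3_general α p q q' hq hq' hcop hconv a b hlen
end

section
/- Let I be a finite interval of real numbers, Y ⊂ I a finite subset with m elements, and z a real number with 0 < z ≤ |I|. Then there exists a subinterval I' ⊂ I of length z such that |I' ∩ Y| ≤ m·z/(|I| - z) (interpreting the bound as +∞ when z = |I|). -/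
/-! Put `n = ⌈(|I| - z)/z⌉₊` and space `n` closed intervals of length `z` at step `|I|/n > z`
across `I`. They are pairwise disjoint, so one of them contains at most `m/n` points of `Y`,
and `|I| - z ≤ n z` turns this into the bound. -/

open Finset

theorem Finset.exists_card_mul_card_filter_le {ι α : Type*} [DecidableEq α] {s : Finset ι}
    (hs : s.Nonempty) {S : ι → Set α} [∀ i, DecidablePred (· ∈ S i)]
    (hS : (s : Set ι).PairwiseDisjoint S) (Y : Finset α) :
    ∃ i ∈ s, #s * #(Y.filter (· ∈ S i)) ≤ #Y := by
  have hdisj : (s : Set ι).PairwiseDisjoint fun i => Y.filter (· ∈ S i) := fun i hi j hj hij =>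
    disjoint_filter.mpr fun _ _ hxi hxj => (hS hi hj hij).ne_of_mem hxi hxj rfl
  have hsum : ∑ i ∈ s, #(Y.filter (· ∈ S i)) ≤ #Y := by
    rw [← card_biUnion hdisj]
    exact card_le_card (biUnion_subset.mpr fun _ _ => filter_subset _ _)
  apply exists_le_of_sum_le hs
  rw [← mul_sum, sum_const, smul_eq_mul]
  exact Nat.mul_le_mul_left _ hsum

theorem Set.pairwiseDisjoint_Icc_add_mul {a d z : ℝ} (hz : 0 ≤ z) (hzd : z < d) (s : Set ℕ) :
    s.PairwiseDisjoint fun k : ℕ => Set.Icc (a + k * d) (a + k * d + z) := by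
  suffices h : ∀ j k : ℕ, j < k →
      Disjoint (Set.Icc (a + j * d) (a + j * d + z)) (Set.Icc (a + k * d) (a + k * d + z)) by
    intro j _ k _ hjk
    rcases hjk.lt_or_gt with hlt | hlt
    exacts [h j k hlt, (h k j hlt).symm]
  intro j k hjk
  have hjk' : (j : ℝ) + 1 ≤ k := by exact_mod_cast hjk
  rw [Set.disjoint_left]
  rintro x ⟨-, hxj⟩ ⟨hxk, -⟩
  have : (j + 1) * d ≤ k * d := mul_le_mul_of_nonneg_right hjk' (by linarith)
  linarith

theorem exists_nat_pos_sub_le_mul_lt {L z : ℝ} (hz : 0 < z) (hzL : z < L) :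
    ∃ n : ℕ, 0 < n ∧ L - z ≤ n * z ∧ n * z < L := by
  have hq : 0 < (L - z) / z := div_pos (by linarith) hz
  refine ⟨⌈(L - z) / z⌉₊, Nat.ceil_pos.mpr hq, ?_, ?_⟩
  · exact (div_le_iff₀ hz).mp (Nat.le_ceil _)
  · have h := Nat.ceil_lt_add_one hq.le
    rw [div_add_one hz.ne', lt_div_iff₀ hz] at h
    linarith

theorem stmt_4_general (a b : ℝ) (Y : Finset ℝ)
    (m : ℕ) (hm : Y.card = m)
    (z : ℝ) (hz : 0 < z) (hzI : z ≤ b - a) :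
    ∃ a' : ℝ, a ≤ a' ∧ a' + z ≤ b ∧
      ((Y.filter (fun y => y ∈ Set.Icc a' (a' + z))).card : ℝ) * (b - a - z)
        ≤ (m : ℝ) * z := by
  rcases hzI.eq_or_lt with heq | hlt
  · exact ⟨a, le_rfl, by linarith, by rw [← heq, sub_self, mul_zero]; positivity⟩
  obtain ⟨n, hn, hLn, hnL⟩ := exists_nat_pos_sub_le_mul_lt hz hlt
  set d := (b - a) / n
  have hnR : (0 : ℝ) < n := by exact_mod_cast hn
  have hzd : z < d := (lt_div_iff₀ hnR).mpr (by linarith)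
  obtain ⟨k, hk, hcount⟩ :=
    exists_card_mul_card_filter_le (nonempty_range_iff.mpr hn.ne')
      (Set.pairwiseDisjoint_Icc_add_mul (a := a) hz.le hzd _) Y
  rw [card_range, hm] at hcount
  have hkn : (k : ℝ) + 1 ≤ n := by exact_mod_cast mem_range.mp hk
  have hnd : n * d = b - a := mul_div_cancel₀ _ hnR.ne'
  refine ⟨a + k * d, by nlinarith, by nlinarith, ?_⟩
  have hcount' : (n : ℝ) * #(Y.filter (· ∈ Set.Icc (a + k * d) (a + k * d + z))) ≤ m := by
    exact_mod_cast hcount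
  set c : ℝ := ((#(Y.filter (· ∈ Set.Icc (a + k * d) (a + k * d + z))) : ℕ) : ℝ)
  calc c * (b - a - z) ≤ c * (n * z) := by gcongr
    _ = n * c * z := by ring
    _ ≤ m * z := by gcongr

/-- Lemma 2(i): if `I = [a,b]` is a finite interval, `Y ⊆ I` a finite set of
`m` points, and `0 < z ≤ |I|`, then some subinterval `I' ⊆ I` of length `z`
satisfies `|I' ∩ Y| ≤ m·z/(|I| - z)` (the bound read as `+∞` when `z = |I|`;
hence stated in the product form `|I' ∩ Y|·(|I| - z) ≤ m·z`). -/
theorem stmt_4 (a b : ℝ) (hab : a < b) (Y : Finset ℝ)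
    (hY : ↑Y ⊆ Set.Icc a b) (m : ℕ) (hm : Y.card = m)
    (z : ℝ) (hz : 0 < z) (hzI : z ≤ b - a) :
    ∃ a' : ℝ, a ≤ a' ∧ a' + z ≤ b ∧
      ((Y.filter (fun y => y ∈ Set.Icc a' (a' + z))).card : ℝ) * (b - a - z)
        ≤ (m : ℝ) * z :=
  stmt_4_general a b Y m hm z hz hzI
end

section
/- Let I be a finite interval of real numbers, Y ⊂ I a finite subset with m elements, and z a real number with 0 < z ≤ |I|. Suppose there is an integer B ≥ 1 such that every subinterval I† ⊂ I satisfies |I† ∩ Y| ≤ B·m·|I†|/|I| + 1. Then there exists a subinterval I'' ⊂ I of length z such that |I'' ∩ Y| ≥ (m-1)·z/|I| − B·m·(z/|I|)². -/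
open scoped Classical

/-- Lemma 2(ii): if `I = [a,b]` is a finite interval, `Y ⊆ I` a finite set of
`m` points, `0 < z ≤ |I|`, and there is an integer `B ≥ 1` such that every
subinterval `I† ⊆ I` satisfies `|I† ∩ Y| ≤ B·m·|I†|/|I| + 1`, then some
subinterval `I'' ⊆ I` of length `z` satisfies
`|I'' ∩ Y| ≥ (m-1)·z/|I| − B·m·(z/|I|)²`. -/
theorem stmt_5 (a b : ℝ) (hab : a < b) (Y : Finset ℝ)
    (hY : ↑Y ⊆ Set.Icc a b) (m : ℕ) (hm : Y.card = m)
    (z : ℝ) (hz : 0 < z) (hzI : z ≤ b - a)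
    (B : ℤ) (hB : 1 ≤ B)
    (hupper : ∀ c d : ℝ, a ≤ c → c ≤ d → d ≤ b →
      ((Y.filter (fun y => y ∈ Set.Icc c d)).card : ℝ)
        ≤ (B : ℝ) * m * ((d - c) / (b - a)) + 1) :
    ∃ a' : ℝ, a ≤ a' ∧ a' + z ≤ b ∧
      ((m : ℝ) - 1) * (z / (b - a)) - (B : ℝ) * m * (z / (b - a)) ^ 2
        ≤ ((Y.filter (fun y => y ∈ Set.Icc a' (a' + z))).card : ℝ) := by
  have hL : (0:ℝ) < b - a := sub_pos.2 hab
  set N := ⌈(b - a) / z⌉₊ with hNdef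
  have hN1 : 1 ≤ N := Nat.one_le_ceil_iff.2 (div_pos hL hz)
  set A : ℕ → ℝ := fun k => min (a + k * z) (b - z) with hA
  have hAa : ∀ k, a ≤ A k := fun k =>
    le_min (le_add_of_nonneg_right (by positivity)) (by linarith)
  have hAb : ∀ k, A k + z ≤ b := fun k => by
    have := min_le_right (a + k * z) (b - z); simp only [hA]; linarith
  have hcover : ∀ y ∈ Y, ∃ k < N, y ∈ Set.Icc (A k) (A k + z) := by
    intro y hy
    obtain ⟨hya, hyb⟩ := hY hy
    refine ⟨min ⌊(y - a)/z⌋₊ (N-1), lt_of_le_of_lt (min_le_right _ _)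
      (Nat.sub_lt hN1 one_pos), ?_, ?_⟩
    · have hkle : ((min ⌊(y - a)/z⌋₊ (N-1) : ℕ) : ℝ) ≤ (y - a)/z := by
        calc ((min ⌊(y - a)/z⌋₊ (N-1) : ℕ) : ℝ) ≤ (⌊(y - a)/z⌋₊ : ℝ) :=
              Nat.cast_le.2 (min_le_left _ _)
          _ ≤ (y - a)/z := Nat.floor_le (div_nonneg (by linarith) hz.le)
      have : ((min ⌊(y - a)/z⌋₊ (N-1) : ℕ) : ℝ) * z ≤ y - a := by
        rw [← le_div_iff₀ hz]; exact hkle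
      exact le_trans (min_le_left _ _) (by linarith)
    · have hk1 : (y - a)/z ≤ ((min ⌊(y - a)/z⌋₊ (N-1) : ℕ) : ℝ) + 1 := by
        rcases le_total (⌊(y - a)/z⌋₊) (N-1) with h | h
        · rw [min_eq_left h]
          exact le_of_lt (Nat.lt_floor_add_one _)
        · rw [min_eq_right h]
          have h1 : ((N - 1 : ℕ) : ℝ) + 1 = (N : ℝ) := by
            have := Nat.sub_add_cancel hN1
            exact_mod_cast congrArg (Nat.cast (R := ℝ)) this
          rw [h1]
          calc (y - a)/z ≤ (b - a)/z := by gcongr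
            _ ≤ (N : ℝ) := Nat.le_ceil _
      have : y - a ≤ (((min ⌊(y - a)/z⌋₊ (N-1) : ℕ) : ℝ) + 1) * z := by
        rw [← div_le_iff₀ hz]; exact hk1
      have h2 : y ≤ a + ((min ⌊(y - a)/z⌋₊ (N-1) : ℕ) : ℝ) * z + z := by nlinarith
      simp only [hA]
      rcases le_total (a + (↑(min ⌊(y - a)/z⌋₊ (N-1)) : ℝ) * z) (b - z) with h | h
      · rw [min_eq_left h]; linarith
      · rw [min_eq_right h]; linarith
  -- pigeonhole
  have hsub : Y ⊆ (Finset.range N).biUnion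
      (fun k => Y.filter (fun y => y ∈ Set.Icc (A k) (A k + z))) := by
    intro y hy
    obtain ⟨k, hk, hmem⟩ := hcover y hy
    exact Finset.mem_biUnion.2 ⟨k, Finset.mem_range.2 hk,
      Finset.mem_filter.2 ⟨hy, hmem⟩⟩
  have hsum : m ≤ ∑ k ∈ Finset.range N,
      (Y.filter (fun y => y ∈ Set.Icc (A k) (A k + z))).card := by
    calc m = Y.card := hm.symm
      _ ≤ _ := le_trans (Finset.card_le_card hsub) Finset.card_biUnion_le
  obtain ⟨k₀, hk₀, hmax⟩ := Finset.exists_max_image (Finset.range N)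
    (fun k => (Y.filter (fun y => y ∈ Set.Icc (A k) (A k + z))).card)
    ⟨0, Finset.mem_range.2 hN1⟩
  set c := (Y.filter (fun y => y ∈ Set.Icc (A k₀) (A k₀ + z))).card with hc
  have hNc : m ≤ N * c := by
    refine le_trans hsum ?_
    calc ∑ k ∈ Finset.range N,
        (Y.filter (fun y => y ∈ Set.Icc (A k) (A k + z))).card
        ≤ (Finset.range N).card • c :=
          Finset.sum_le_card_nsmul _ _ c (fun x hx => hmax x hx)
      _ = N * c := by simp [smul_eq_mul]
  refine ⟨A k₀, hAa k₀, hAb k₀, ?_⟩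
  -- numeric part
  have hNc' : (m : ℝ) ≤ (N : ℝ) * (c : ℝ) := by exact_mod_cast hNc
  have hNlt : (N : ℝ) < (b - a) / z + 1 := Nat.ceil_lt_add_one (by positivity)
  have hB' : (1 : ℝ) ≤ (B : ℝ) := by exact_mod_cast hB
  have hc0 : (0 : ℝ) ≤ (c : ℝ) := Nat.cast_nonneg _
  have hm0 : (0 : ℝ) ≤ (m : ℝ) := Nat.cast_nonneg _
  set t := z / (b - a) with ht
  have ht0 : 0 < t := div_pos hz hL
  have ht1 : t ≤ 1 := (div_le_one hL).2 hzI
  have hNt : (N : ℝ) * t ≤ 1 + t := by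
    have h1 : ((b - a)/z) * t = 1 := by rw [ht]; field_simp
    nlinarith
  show ((m : ℝ) - 1) * t - (B : ℝ) * m * t ^ 2 ≤ (c : ℝ)
  nlinarith [mul_le_mul_of_nonneg_right hNt hc0,
    mul_le_mul_of_nonneg_right hNc' (le_of_lt ht0),
    mul_nonneg (mul_nonneg hm0 (le_of_lt ht0)) (mul_nonneg (le_of_lt ht0) (le_of_lt ht0)),
    mul_nonneg (mul_nonneg (sub_nonneg.2 hB') hm0) (sq_nonneg t)]
end

section
/- Let α be irrational with convergent p_h/q_h. For each k = 1, ..., q_h, the point {kα} lies in the interval (ℓ(k)/q_h − 1/q_{h+1}, ℓ(k)/q_h + 1/q_{h+1}) mod 1, where ℓ(k) = k·p_h mod q_h, and the map k ↦ ℓ(k) is a bijection from {1,...,q_h} onto {0,1,...,q_h−1}. -/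
/-- If `p/q` is a convergent of the irrational `α` with next convergent
denominator `q'` (so `|α - p/q| < 1/(q q')` and `gcd(p,q)=1`), then for each
`k = 1, ..., q` the point `kα` lies, modulo `1`, in the interval
`(ℓ(k)/q − 1/q', ℓ(k)/q + 1/q')` where `ℓ(k) = k·p mod q`, and the map
`k ↦ ℓ(k)` is a bijection from `{1,...,q}` onto `{0,1,...,q−1}`. -/
theorem stmt_11 (α : ℝ) (hα : Irrational α) (p : ℤ) (q q' : ℕ)
    (hq : 0 < q) (hq' : 0 < q') (hcop : IsCoprime p (q : ℤ))
    (hconv : |α - (p : ℝ) / q| < 1 / (q * q')) :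
    (∀ k : ℕ, 1 ≤ k → k ≤ q → ∃ m : ℤ,
      |((k : ℝ) * α - m) - (((k : ℤ) * p % q : ℤ) : ℝ) / q| < 1 / q') ∧
    Set.BijOn (fun k : ℕ => ((k : ℤ) * p % q : ℤ))
      (Set.Icc 1 q) (Set.Ico (0 : ℤ) q) := by
  have hqR : (0:ℝ) < q := by exact_mod_cast hq
  have hq'R : (0:ℝ) < q' := by exact_mod_cast hq'
  have hqz : (q:ℤ) ≠ 0 := by exact_mod_cast hq.ne'
  constructor
  · intro k hk1 hkq
    refine ⟨(k : ℤ) * p / q, ?_⟩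
    have hdm : ((k:ℤ) * p % q : ℤ) = (k:ℤ) * p - q * ((k:ℤ) * p / q) :=
      (Int.emod_def _ _)
    have key : ((k : ℝ) * α - ((k:ℤ) * p / q : ℤ)) - (((k : ℤ) * p % q : ℤ) : ℝ) / q
        = (k : ℝ) * (α - (p : ℝ) / q) := by
      rw [hdm]
      push_cast
      field_simp
      ring
    rw [key, abs_mul, abs_of_nonneg (by positivity : (0:ℝ) ≤ (k:ℝ))]
    have hkpos : (0:ℝ) < k := by exact_mod_cast hk1
    calc (k : ℝ) * |α - (p : ℝ) / q| < (k : ℝ) * (1 / (q * q')) :=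
          (mul_lt_mul_iff_right₀ hkpos).2 hconv
      _ ≤ (q : ℝ) * (1 / (q * q')) := by
          apply mul_le_mul_of_nonneg_right (by exact_mod_cast hkq)
          positivity
      _ = 1 / q' := by field_simp
  · have hqZ : (0:ℤ) < q := by exact_mod_cast hq
    refine ⟨?_, ?_, ?_⟩
    · intro k hk
      exact ⟨Int.emod_nonneg _ hqz, Int.emod_lt_of_pos _ hqZ⟩
    · intro a ha b hb hab
      simp only at hab
      have hdvd : (q:ℤ) ∣ ((a:ℤ) - b) * p := by
        have := Int.emod_emod_of_dvd ((a:ℤ)*p) (dvd_refl (q:ℤ))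
        have h : ((a:ℤ) * p - (b:ℤ) * p) % q = 0 := by
          rw [Int.sub_emod, hab, sub_self, Int.zero_emod]
        rw [← sub_mul] at h
        exact Int.dvd_of_emod_eq_zero h
      have hcop' : IsCoprime ((q:ℤ)) p := hcop.symm
      have hdvd2 : (q:ℤ) ∣ ((a:ℤ) - b) := hcop'.dvd_of_dvd_mul_right hdvd
      have h1 : -(q:ℤ) < (a:ℤ) - b := by
        have : (1:ℤ) ≤ a := by exact_mod_cast ha.1
        have : (b:ℤ) ≤ q := by exact_mod_cast hb.2
        omega
      have h2 : (a:ℤ) - b < q := by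
        have : (1:ℤ) ≤ b := by exact_mod_cast hb.1
        have : (a:ℤ) ≤ q := by exact_mod_cast ha.2
        omega
      have : (a:ℤ) - b = 0 :=
        Int.eq_zero_of_abs_lt_dvd hdvd2 (abs_lt.2 ⟨h1, h2⟩)
      omega
    · intro n hn
      obtain ⟨hn0, hnq⟩ := hn
      obtain ⟨u, v, huv⟩ := hcop
      -- u * p + v * q = 1
      set k0 : ℤ := (n * u) % q with hk0
      have hk00 : 0 ≤ k0 := Int.emod_nonneg _ hqz
      have hk0q : k0 < q := Int.emod_lt_of_pos _ hqZ
      have hmod : k0 * p % q = n := by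
        have h1 : k0 * p % q = (n * u * p) % q := by
          rw [hk0, Int.mul_emod, Int.emod_emod_of_dvd _ (dvd_refl _), ← Int.mul_emod]
        have h2 : n * u * p = n - n * (v * q) := by
          have : u * p = 1 - v * q := by linarith [huv]
          calc n * u * p = n * (u * p) := by ring
            _ = n * (1 - v * q) := by rw [this]
            _ = n - n * (v * q) := by ring
        rw [h1, h2]
        have : (n - n * (v * q)) % q = n % q := by
          have : n - n * (v * q) = n + (-(n*v)) * q := by ring
          rw [this, Int.add_mul_emod_self_right]
        rw [this, Int.emod_eq_of_lt hn0 hnq]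
      by_cases h0 : k0 = 0
      · refine ⟨q, ⟨hq, le_refl q⟩, ?_⟩
        simp only
        have : ((q:ℤ)) * p % q = 0 % q := by
          conv_lhs => rw [mul_comm]
          rw [Int.mul_emod_left]
          simp
        rw [this]
        have : (0:ℤ) % q = 0 := Int.zero_emod q
        rw [this]
        rw [h0] at hmod
        simpa using hmod
      · refine ⟨k0.toNat, ⟨?_, ?_⟩, ?_⟩
        · omega
        · omega
        · simp only
          rw [Int.toNat_of_nonneg hk00]
          exact hmod
end

section
/- Let α be irrational, q_h a convergent denominator, and suppose a bi-infinite arithmetic-like structure: among any q_h consecutive terms of the sequence {β + kα}, k ∈ ℤ, at most 3 lie in any prescribed set {0} (i.e., hit an integer), whenever β ranges over an interval of length at most 1/q_h. Consequently, if a geodesic flow segment of slope α on a polysquare surface makes N consecutive crossings of vertical edges while transporting an interval of length at most 1/q_h, it hits a vertex of the surface at most 3⌈N/q_h⌉ times. -/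
open scoped Classical

/-- Vertex-hitting bound: let `α` be irrational and `q` a convergent
denominator of `α`. Successive vertical-edge crossings of a geodesic of slope
`α` on a polysquare surface correspond to the orbit `β + kα` mod 1, and vertex
hits to integer values. Suppose that among any `q` consecutive crossings, at
most `3` indices `k` admit a point `β'` of the transported interval
`[β, β + 1/q]` (of length `≤ 1/q`) with `β' + kα ∈ ℤ`. Then among any `N`
consecutive crossings, at most `3⌈N/q⌉` indices `k` admit such a vertex hit. -/
theorem stmt_18 (α : ℝ) (hα : Irrational α) (q : ℕ) (hq : 0 < q)
    (h3 : ∀ (β : ℝ) (s : ℤ),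
      ((Finset.Ico s (s + q)).filter (fun k : ℤ =>
        ∃ β' ∈ Set.Icc β (β + 1 / q), ∃ m : ℤ, β' + (k : ℝ) * α = m)).card ≤ 3) :
    ∀ (β : ℝ) (s : ℤ) (N : ℕ),
      ((Finset.Ico s (s + N)).filter (fun k : ℤ =>
        ∃ β' ∈ Set.Icc β (β + 1 / q), ∃ m : ℤ, β' + (k : ℝ) * α = m)).card
        ≤ 3 * ((N + q - 1) / q) := by
  intro β s N
  induction N using Nat.strong_induction_on generalizing s with
  | _ N ih =>
    rcases Nat.eq_zero_or_pos N with h0 | hN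
    · subst h0
      simp
    rcases le_or_gt N q with hle | hlt
    · have hsub : ((Finset.Ico s (s + N)).filter (fun k : ℤ =>
          ∃ β' ∈ Set.Icc β (β + 1 / q), ∃ m : ℤ, β' + (k : ℝ) * α = m)) ⊆
          ((Finset.Ico s (s + q)).filter (fun k : ℤ =>
          ∃ β' ∈ Set.Icc β (β + 1 / q), ∃ m : ℤ, β' + (k : ℝ) * α = m)) := by
        apply Finset.filter_subset_filter
        apply Finset.Ico_subset_Ico_right
        omega
      have h1 : 1 ≤ (N + q - 1) / q := Nat.one_le_div_iff hq |>.mpr (by omega)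
      calc _ ≤ _ := Finset.card_le_card hsub
        _ ≤ 3 := h3 β s
        _ ≤ 3 * ((N + q - 1) / q) := by omega
    · have hsplit : Finset.Ico s (s + (N : ℤ)) =
          Finset.Ico s (s + q) ∪ Finset.Ico (s + q) (s + N) := by
        rw [Finset.Ico_union_Ico_eq_Ico] <;> omega
      rw [hsplit, Finset.filter_union]
      refine le_trans (Finset.card_union_le _ _) ?_
      have h1 := h3 β s
      have h2 := ih (N - q) (by omega) (s + q)
      have hcast : s + (q : ℤ) + ((N - q : ℕ) : ℤ) = s + N := by
        push_cast [Nat.cast_sub hlt.le]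
        ring
      rw [hcast] at h2
      have harith : (N + q - 1) / q = ((N - q) + q - 1) / q + 1 := by
        rw [show N + q - 1 = ((N - q) + q - 1) + q by omega, Nat.add_div_right _ hq]
      omega
end
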